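/- arXiv:0802.1730 — 5 statements merged into one kernel-verified Lean document; each statement's English description precedes it below -/
import Mathlib

section
/- Let γ : ℝ → ℝ^d be a smooth curve all of whose derivatives have constant norm. Then for each s, the subspace W_e(s) spanned by the even-order derivatives of γ at s (including γ(s)) is orthogonal to the subspace W_o(s) spanned by the odd-order derivatives of γ at s. -/
open scoped RealInnerProductSpace

/-- For a smooth curve all of whose derivatives have constant
norm, the span of the even-order derivatives at `s` is orthogonal to the span
of the odd-order derivatives at `s`. -/
theorem stmt7 (d : ℕ)
    (γ : ℝ → EuclideanSpace ℝ (Fin d))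
    (hγ : ContDiff ℝ (⊤ : ℕ∞) γ)
    (hconst : ∀ j : ℕ, ∃ c : ℝ, ∀ s : ℝ, ‖iteratedDeriv j γ s‖ = c) :
    ∀ s : ℝ,
      (Submodule.span ℝ {x | ∃ j : ℕ, x = iteratedDeriv (2 * j) γ s}) ⟂
      (Submodule.span ℝ {x | ∃ j : ℕ, x = iteratedDeriv (2 * j + 1) γ s}) := by
  have hD : ∀ a : ℕ, Differentiable ℝ (iteratedDeriv a γ) := by
    intro a
    have h : ContDiff ℝ (⊤ : ℕ∞) (iteratedDeriv a γ) := by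
      rw [iteratedDeriv_eq_iterate]
      exact ContDiff.iterate_deriv a (hγ.of_le (by simp))
    exact h.differentiable (by simp)
  have hHD : ∀ (a : ℕ) (t : ℝ),
      HasDerivAt (iteratedDeriv a γ) (iteratedDeriv (a + 1) γ t) t := by
    intro a t
    have h1 : DifferentiableAt ℝ (iteratedDeriv a γ) t := hD a t
    simpa [iteratedDeriv_succ] using h1.hasDerivAt
  set F : ℕ → ℕ → ℝ → ℝ := fun a b t => ⟪iteratedDeriv a γ t, iteratedDeriv b γ t⟫ with hF
  have hFder : ∀ (a b : ℕ) (t : ℝ),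
      HasDerivAt (F a b) (F a (b + 1) t + F (a + 1) b t) t := by
    intro a b t
    exact (hHD a t).inner ℝ (hHD b t)
  -- the diagonal inner products are constant
  have hdiag : ∀ (n : ℕ) (s t : ℝ), F n n s = F n n t := by
    intro n s t
    obtain ⟨c, hc⟩ := hconst n
    simp only [hF, real_inner_self_eq_norm_sq, hc]
  -- F n (n+1) ≡ 0
  have hanchor : ∀ (n : ℕ) (t : ℝ), F n (n + 1) t = 0 := by
    intro n t
    have hconstF : F n n = fun _ => F n n 0 := funext fun u => hdiag n u 0
    have h0 : HasDerivAt (F n n) 0 t := by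
      rw [hconstF]; exact hasDerivAt_const t _
    have h1 := (hFder n n t).unique h0
    have hsymm : F (n + 1) n t = F n (n + 1) t := real_inner_comm _ _
    rw [hsymm] at h1
    linarith
  -- main induction
  have main : ∀ n : ℕ, (∀ a b, a + b = n → ∀ s t, F a b s = F a b t) ∧
      (Odd n → ∀ a b, a + b = n → ∀ s, F a b s = 0) := by
    intro n
    induction n with
    | zero =>
      constructor
      · rintro a b hab s t
        obtain ⟨rfl, rfl⟩ : a = 0 ∧ b = 0 := by omega
        exact hdiag 0 s t
      · rintro ⟨k, hk⟩; omega
    | succ n ih =>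
      -- derivative of level-n inner products vanish
      have hzero : ∀ a b, a + b = n → ∀ t, F a (b + 1) t + F (a + 1) b t = 0 := by
        intro a b hab t
        have hconstF : F a b = fun _ => F a b 0 := funext fun u => ih.1 a b hab u 0
        have h0 : HasDerivAt (F a b) 0 t := by
          rw [hconstF]; exact hasDerivAt_const t _
        exact (hFder a b t).unique h0
      -- chain along the antidiagonal
      have hchain : ∀ a, a ≤ n + 1 → ∀ t, F a (n + 1 - a) t = (-1 : ℝ) ^ a * F 0 (n + 1) t := by
        intro a
        induction a with
        | zero => intro _ t; simp
        | succ a iha =>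
          intro ha t
          have ha' : a ≤ n := by omega
          have h1 : F a (n - a + 1) t + F (a + 1) (n - a) t = 0 :=
            hzero a (n - a) (by omega) t
          have h2 : n - a + 1 = n + 1 - a := by omega
          have h3 : F (a + 1) (n + 1 - (a + 1)) t = - F a (n + 1 - a) t := by
            have : n + 1 - (a + 1) = n - a := by omega
            rw [this, ← h2]
            linarith
          rw [h3, iha (by omega) t]
          ring
      rcases Nat.even_or_odd (n + 1) with he | ho
      · -- n+1 even : constancy; oddness vacuous
        obtain ⟨m, hm⟩ := he
        have hmle : m ≤ n + 1 := by omega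
        have hF0 : ∀ t, F 0 (n + 1) t = (-1 : ℝ) ^ m * F m m t := by
          intro t
          have := hchain m hmle t
          have hmm : n + 1 - m = m := by omega
          rw [hmm] at this
          have hsq : ((-1 : ℝ) ^ m) * ((-1 : ℝ) ^ m) = 1 := by
            rcases Nat.even_or_odd m with h | h
            · rw [h.neg_one_pow]; ring
            · rw [h.neg_one_pow]; ring
          calc F 0 (n + 1) t = ((-1:ℝ)^m * (-1:ℝ)^m) * F 0 (n+1) t := by rw [hsq]; ring
            _ = (-1:ℝ)^m * F m m t := by rw [mul_assoc, ← this]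
        constructor
        · intro a b hab s t
          have hb : b = n + 1 - a := by omega
          have ha : a ≤ n + 1 := by omega
          rw [hb, hchain a ha s, hchain a ha t, hF0 s, hF0 t, hdiag m s t]
        · rintro ⟨k, hk⟩ a b hab s
          exact absurd hk (by omega)
      · -- n+1 odd
        obtain ⟨m, hm⟩ := ho
        have hzero0 : ∀ t, F 0 (n + 1) t = 0 := by
          intro t
          have h1 := hchain m (by omega) t
          have hmm : n + 1 - m = m + 1 := by omega
          rw [hmm, hanchor m t] at h1
          have : ((-1 : ℝ) ^ m) ≠ 0 := by positivity
          field_simp at h1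
          exact (mul_eq_zero.mp h1.symm).resolve_left this
        have hall : ∀ a b, a + b = n + 1 → ∀ t, F a b t = 0 := by
          intro a b hab t
          have hb : b = n + 1 - a := by omega
          rw [hb, hchain a (by omega) t, hzero0 t, mul_zero]
        exact ⟨fun a b hab s t => by rw [hall a b hab s, hall a b hab t],
          fun _ a b hab s => hall a b hab s⟩
  intro s
  rw [Submodule.isOrtho_span]
  rintro u ⟨i, rfl⟩ v ⟨j, rfl⟩
  exact (main (2 * i + (2 * j + 1))).2 ⟨i + j, by ring⟩ (2 * i) (2 * j + 1) rfl s
end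

section
/- Suppose γ : ℝ → ℝ^d satisfies a linear constant-coefficient ODE, so γ(s) = Σ_{j=1}^K q_j(s) e^{λ_j s} with distinct λ_j ∈ ℂ and nonzero ℂ^d-valued polynomials q_j. If ‖γ(s)‖ is constant in s, then every λ_j is purely imaginary and every q_j is a constant polynomial. -/
/-!
Writing `e_μ(s) = e^{μ s}`, the square `‖γ(s)‖² = ∑_{j,k} ⟨q_j(s), q_k(s)⟩ e_{λ_j + conj λ_k}(s)`
is again an exponential polynomial, and it equals the constant `c² e_0`. Exponential polynomials
with distinct exponents are linearly independent, so the coefficients can be compared exponent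
by exponent. If `r` is the largest (or smallest) real part of the `λ_j`, the exponent `2r` arises
only from the pairs `j = k` with `Re λ_j = r`, and its coefficient `∑ ‖q_j‖²` is not zero;
hence `2r = 0`. Once all `λ_j` are
purely imaginary, the exponent `0` gives `∑_j ‖q_j(s)‖² = c²`, so every `q_j` is bounded on `ℝ`
and therefore constant.
-/

open Polynomial Complex Finset ComplexConjugate

theorem Polynomial.eq_zero_of_forall_eval_ofReal_eq_zero {p : ℂ[X]}
    (h : ∀ s : ℝ, p.eval (s : ℂ) = 0) : p = 0 :=
  p.eq_zero_of_infinite_isRoot (Set.infinite_of_injective_forall_mem ofReal_injective h)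

theorem Polynomial.conj_eval_ofReal (p : ℂ[X]) (s : ℝ) :
    conj (p.eval (s : ℂ)) = (p.map (starRingEnd ℂ)).eval (s : ℂ) := by
  rw [eval_map, ← eval₂_at_apply, conj_ofReal]

theorem Polynomial.natDegree_eq_zero_of_norm_eval_ofReal_le {p : ℂ[X]} {B : ℝ}
    (h : ∀ s : ℝ, ‖p.eval (s : ℂ)‖ ≤ B) : p.natDegree = 0 := by
  by_contra hp
  have htends : Filter.Tendsto (fun s : ℝ => ‖p.eval (s : ℂ)‖) Filter.atTop Filter.atTop :=
    p.tendsto_norm_atTop (natDegree_pos_iff_degree_pos.mp (Nat.pos_of_ne_zero hp))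
      (by simpa only [norm_real, Real.norm_eq_abs] using Filter.tendsto_abs_atTop_atTop)
  obtain ⟨s, hs⟩ := (htends.eventually_gt_atTop B).exists
  exact (h s).not_gt hs

-- `d/ds (p(s) e^{cs}) = (twistedDerivative c p)(s) e^{cs}`
noncomputable def twistedDerivative (c : ℂ) (p : ℂ[X]) : ℂ[X] := derivative p + C c * p

theorem twistedDerivative_zero : twistedDerivative 0 = derivative := by
  funext p
  simp only [twistedDerivative, C_0, zero_mul, add_zero]

theorem twistedDerivative_sub (c ν : ℂ) (p : ℂ[X]) :
    twistedDerivative (c - ν) p = twistedDerivative c p - C ν * p := by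
  simp only [twistedDerivative, C_sub]; ring

theorem eq_zero_of_twistedDerivative_eq_zero {c : ℂ} (hc : c ≠ 0) {p : ℂ[X]}
    (h : twistedDerivative c p = 0) : p = 0 := by
  by_contra hp
  have hlt := degree_derivative_lt hp
  rw [eq_neg_of_add_eq_zero_left h, degree_neg, degree_C_mul hc] at hlt
  exact lt_irrefl _ hlt

theorem eq_zero_of_iterate_twistedDerivative_eq_zero {c : ℂ} (hc : c ≠ 0) {p : ℂ[X]} {n : ℕ}
    (h : (twistedDerivative c)^[n] p = 0) : p = 0 := by
  induction n with
  | zero => exact h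
  | succ n ih =>
    rw [Function.iterate_succ_apply'] at h
    exact ih (eq_zero_of_twistedDerivative_eq_zero hc h)

theorem hasDerivAt_eval_mul_exp (p : ℂ[X]) (c : ℂ) (s : ℝ) :
    HasDerivAt (fun t : ℝ => p.eval (t : ℂ) * exp (c * t))
      ((twistedDerivative c p).eval (s : ℂ) * exp (c * s)) s := by
  have hexp : HasDerivAt (fun z : ℂ => exp (c * z)) (exp (c * s) * c) s := by
    have h := ((hasDerivAt_id (s : ℂ)).const_mul c).cexp
    simp only [id_eq, mul_one] at h
    exact h
  convert ((p.hasDerivAt (s : ℂ)).fun_mul hexp).comp_ofReal using 1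
  simp only [twistedDerivative, eval_add, eval_mul, eval_C]
  ring

theorem sum_twistedDerivative_eval_mul_exp_eq_zero {T : Finset ℂ} {P : ℂ → ℂ[X]}
    (h : ∀ s : ℝ, ∑ μ ∈ T, (P μ).eval (s : ℂ) * exp (μ * s) = 0) (ν : ℂ) (s : ℝ) :
    ∑ μ ∈ T, (twistedDerivative (μ - ν) (P μ)).eval (s : ℂ) * exp (μ * s) = 0 := by
  have hderiv : HasDerivAt (fun t : ℝ => ∑ μ ∈ T, (P μ).eval (t : ℂ) * exp (μ * t))
      (∑ μ ∈ T, (twistedDerivative μ (P μ)).eval (s : ℂ) * exp (μ * s)) s :=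
    HasDerivAt.fun_sum fun μ _ => hasDerivAt_eval_mul_exp (P μ) μ s
  rw [funext h] at hderiv
  simp only [twistedDerivative_sub, eval_sub, eval_mul, eval_C, sub_mul, sum_sub_distrib,
    hderiv.unique (hasDerivAt_const s 0), mul_assoc, ← mul_sum, h s, mul_zero, sub_zero]

theorem sum_iterate_twistedDerivative_eval_mul_exp_eq_zero {T : Finset ℂ} {P : ℂ → ℂ[X]}
    (h : ∀ s : ℝ, ∑ μ ∈ T, (P μ).eval (s : ℂ) * exp (μ * s) = 0) (ν : ℂ) (n : ℕ) (s : ℝ) :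
    ∑ μ ∈ T, ((twistedDerivative (μ - ν))^[n] (P μ)).eval (s : ℂ) * exp (μ * s) = 0 := by
  induction n generalizing s with
  | zero => exact h s
  | succ n ih =>
    simp only [Function.iterate_succ_apply']
    exact sum_twistedDerivative_eval_mul_exp_eq_zero ih ν s

theorem eq_zero_of_forall_sum_eval_mul_exp_eq_zero (T : Finset ℂ) (P : ℂ → ℂ[X])
    (h : ∀ s : ℝ, ∑ μ ∈ T, (P μ).eval (s : ℂ) * exp (μ * s) = 0) : ∀ μ ∈ T, P μ = 0 := by
  classical
  induction T using Finset.induction_on generalizing P with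
  | empty => simp
  | insert ν T hν ih =>
    -- `(d/ds - ν)^n` with `n > deg P ν` kills the `ν`-term and is injective on the others.
    have hkill := sum_iterate_twistedDerivative_eval_mul_exp_eq_zero h ν ((P ν).natDegree + 1)
    simp only [sum_insert hν, sub_self, twistedDerivative_zero,
      iterate_derivative_eq_zero (Nat.lt_succ_self _), eval_zero, zero_mul, zero_add] at hkill
    have hT : ∀ μ ∈ T, P μ = 0 := fun μ hμ =>
      eq_zero_of_iterate_twistedDerivative_eq_zero (sub_ne_zero.mpr (ne_of_mem_of_not_mem hμ hν))
        (ih _ hkill μ hμ)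
    have hPν : P ν = 0 := eq_zero_of_forall_eval_ofReal_eq_zero fun s => by
      have hs := h s
      rw [sum_insert hν, sum_eq_zero fun μ hμ => by rw [hT μ hμ, eval_zero, zero_mul],
        add_zero] at hs
      exact (mul_eq_zero.mp hs).resolve_right (exp_ne_zero _)
    simpa [forall_mem_insert] using ⟨hPν, hT⟩

theorem sum_fiber_eq_of_forall_sum_eval_mul_exp_eq_const {ι : Type*} [Fintype ι] (μ : ι → ℂ)
    (P : ι → ℂ[X]) (a : ℂ) (h : ∀ s : ℝ, ∑ i, (P i).eval (s : ℂ) * exp (μ i * s) = a) (v : ℂ) :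
    ∑ i with μ i = v, P i = if v = 0 then C a else 0 := by
  classical
  set T := insert 0 (univ.image μ)
  have hmaps : ∀ i ∈ univ, μ i ∈ T := fun i _ =>
    mem_insert_of_mem (mem_image_of_mem μ (mem_univ i))
  have hT : ∀ s : ℝ, ∑ w ∈ T, (∑ i with μ i = w, P i - if w = 0 then C a else 0).eval (s : ℂ)
      * exp (w * s) = 0 := by
    intro s
    have hfib : ∑ w ∈ T, (∑ i with μ i = w, P i).eval (s : ℂ) * exp (w * s)
        = ∑ i, (P i).eval (s : ℂ) * exp (μ i * s) := by
      rw [← sum_fiberwise_of_maps_to hmaps]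
      refine sum_congr rfl fun w _ => ?_
      rw [eval_finsetSum, sum_mul]
      exact sum_congr rfl fun i hi => by rw [(mem_filter.mp hi).2]
    have hconst : ∑ w ∈ T, (if w = 0 then C a else 0).eval (s : ℂ) * exp (w * s) = a := by
      rw [sum_eq_single_of_mem 0 (mem_insert_self _ _) fun w _ hw => by simp [hw]]
      simp
    simp only [eval_sub, sub_mul, sum_sub_distrib, hfib, hconst, h s, sub_self]
  by_cases hv : v ∈ T
  · exact sub_eq_zero.mp (eq_zero_of_forall_sum_eval_mul_exp_eq_zero T _ hT v hv)
  · have hv0 : v ≠ 0 := fun h0 => hv (h0 ▸ mem_insert_self _ _)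
    rw [if_neg hv0]
    exact sum_eq_zero fun i hi => absurd ((mem_filter.mp hi).2 ▸ hmaps i (mem_univ i)) hv

section NormSq

variable {ι κ : Type*} [Fintype κ]

-- For `f_i(s) = ∑_j q_{ji}(s) e^{λ_j s}`, `∑_i |f_i(s)|²` is the exponential polynomial with
-- coefficient `normSqCoeff q (j, k)` at the exponent `λ_j + conj λ_k`.
noncomputable def normSqCoeff (q : ι → κ → ℂ[X]) (p : ι × ι) : ℂ[X] :=
  ∑ i, q p.1 i * (q p.2 i).map (starRingEnd ℂ)

theorem normSqCoeff_diag_eval (q : ι → κ → ℂ[X]) (j : ι) (s : ℝ) :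
    (normSqCoeff q (j, j)).eval (s : ℂ) = ((∑ i, normSq ((q j i).eval (s : ℂ)) : ℝ) : ℂ) := by
  simp only [normSqCoeff, eval_finsetSum, eval_mul, ← conj_eval_ofReal, mul_conj, ofReal_sum]

theorem eq_zero_of_sum_normSqCoeff_diag_eq_zero {q : ι → κ → ℂ[X]} {S : Finset ι}
    (h : ∑ j ∈ S, normSqCoeff q (j, j) = 0) {j : ι} (hj : j ∈ S) : q j = 0 := by
  funext i
  refine eq_zero_of_forall_eval_ofReal_eq_zero fun s => normSq_eq_zero.mp ?_
  have hs := congrArg (fun P => P.eval (s : ℂ)) h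
  simp only [eval_finsetSum, normSqCoeff_diag_eval, eval_zero, ← ofReal_sum, ofReal_eq_zero] at hs
  have hnonneg : ∀ j ∈ S, 0 ≤ ∑ i, normSq ((q j i).eval (s : ℂ)) :=
    fun _ _ => sum_nonneg fun _ _ => normSq_nonneg _
  exact (sum_eq_zero_iff_of_nonneg fun _ _ => normSq_nonneg _).mp
    ((sum_eq_zero_iff_of_nonneg hnonneg).mp hs j hj) i (mem_univ i)

theorem exponent_eq_iff {lam : ι → ℂ} (hlam : Function.Injective lam) {r : ℝ}
    (hext : ∀ j k, (lam j).re + (lam k).re = 2 * r → (lam j).re = r ∧ (lam k).re = r)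
    (j k : ι) : lam j + conj (lam k) = 2 * r ↔ j = k ∧ (lam j).re = r := by
  constructor
  · intro h
    have hre := congrArg re h
    have him := congrArg im h
    simp only [add_re, conj_re, add_im, conj_im, mul_re, mul_im, ofReal_re, ofReal_im,
      re_ofNat, im_ofNat] at hre him
    obtain ⟨hj, hk⟩ := hext j k (by linarith)
    exact ⟨hlam (Complex.ext (hj.trans hk.symm) (by linarith)), hj⟩
  · rintro ⟨rfl, hj⟩
    apply Complex.ext
    · simp [hj]
      ring
    · simp

variable [Fintype ι]

theorem sum_normSqCoeff_eval_mul_exp (lam : ι → ℂ) (q : ι → κ → ℂ[X]) {f : κ → ℂ} {s : ℝ}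
    (hf : ∀ i, f i = ∑ j, (q j i).eval (s : ℂ) * exp (lam j * s)) :
    ∑ p : ι × ι, (normSqCoeff q p).eval (s : ℂ) * exp ((lam p.1 + conj (lam p.2)) * s)
      = ∑ i, f i * conj (f i) := by
  have hconj : ∀ i, conj (f i) = ∑ k, ((q k i).map (starRingEnd ℂ)).eval (s : ℂ)
      * exp (conj (lam k) * s) := fun i => by
    simp only [hf, map_sum, map_mul, conj_eval_ofReal, ← exp_conj, conj_ofReal]
  calc ∑ p : ι × ι, (normSqCoeff q p).eval (s : ℂ) * exp ((lam p.1 + conj (lam p.2)) * s)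
      = ∑ p : ι × ι, ∑ i, (q p.1 i).eval (s : ℂ) * exp (lam p.1 * s)
          * (((q p.2 i).map (starRingEnd ℂ)).eval (s : ℂ) * exp (conj (lam p.2) * s)) :=
        sum_congr rfl fun p _ => by
          rw [normSqCoeff, eval_finsetSum, sum_mul]
          exact sum_congr rfl fun i _ => by rw [eval_mul, add_mul, exp_add]; ring
    _ = ∑ i, f i * conj (f i) := by
        rw [sum_comm]
        exact sum_congr rfl fun i _ => by
          rw [hconj i, hf i, sum_mul_sum]
          exact Fintype.sum_prod_type _

theorem sum_normSqCoeff_fiber_eq {lam : ι → ℂ} (hlam : Function.Injective lam) {r : ℝ}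
    (hext : ∀ j k, (lam j).re + (lam k).re = 2 * r → (lam j).re = r ∧ (lam k).re = r)
    (q : ι → κ → ℂ[X]) :
    ∑ p : ι × ι with lam p.1 + conj (lam p.2) = 2 * r, normSqCoeff q p
      = ∑ j with (lam j).re = r, normSqCoeff q (j, j) := by
  classical
  simp only [sum_filter, exponent_eq_iff hlam hext, Fintype.sum_prod_type, ite_and,
    sum_ite_eq, mem_univ, if_true]

theorem re_eq_zero_of_extreme {lam : ι → ℂ} (hlam : Function.Injective lam)
    {q : ι → κ → ℂ[X]} (hq : ∀ j, q j ≠ 0) {a : ℝ}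
    (hsq : ∀ s : ℝ, ∑ p : ι × ι, (normSqCoeff q p).eval (s : ℂ)
      * exp ((lam p.1 + conj (lam p.2)) * s) = a) {j₀ : ι}
    (hext : ∀ j k, (lam j).re + (lam k).re = 2 * (lam j₀).re →
      (lam j).re = (lam j₀).re ∧ (lam k).re = (lam j₀).re) :
    (lam j₀).re = 0 := by
  by_contra hr
  have hfiber := sum_fiber_eq_of_forall_sum_eval_mul_exp_eq_const _ _ _ hsq (2 * (lam j₀).re)
  rw [if_neg (by exact_mod_cast mul_ne_zero two_ne_zero hr),
    sum_normSqCoeff_fiber_eq hlam hext] at hfiber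
  exact hq j₀ (eq_zero_of_sum_normSqCoeff_diag_eq_zero hfiber (mem_filter.mpr ⟨mem_univ _, rfl⟩))

theorem re_eq_zero {lam : ι → ℂ} (hlam : Function.Injective lam)
    {q : ι → κ → ℂ[X]} (hq : ∀ j, q j ≠ 0) {a : ℝ}
    (hsq : ∀ s : ℝ, ∑ p : ι × ι, (normSqCoeff q p).eval (s : ℂ)
      * exp ((lam p.1 + conj (lam p.2)) * s) = a) (j : ι) :
    (lam j).re = 0 := by
  obtain ⟨jM, -, hM⟩ := exists_max_image univ (fun k => (lam k).re) ⟨j, mem_univ j⟩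
  obtain ⟨jm, -, hm⟩ := exists_min_image univ (fun k => (lam k).re) ⟨j, mem_univ j⟩
  have hM0 := re_eq_zero_of_extreme hlam hq hsq (j₀ := jM) fun k l hkl => by
    have := hM k (mem_univ k)
    have := hM l (mem_univ l)
    constructor <;> linarith
  have hm0 := re_eq_zero_of_extreme hlam hq hsq (j₀ := jm) fun k l hkl => by
    have := hm k (mem_univ k)
    have := hm l (mem_univ l)
    constructor <;> linarith
  linarith [hM j (mem_univ j), hm j (mem_univ j)]

theorem sum_sum_normSq_eval_eq {lam : ι → ℂ} (hlam : Function.Injective lam)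
    (hre : ∀ j, (lam j).re = 0) {q : ι → κ → ℂ[X]} {a : ℝ}
    (hsq : ∀ s : ℝ, ∑ p : ι × ι, (normSqCoeff q p).eval (s : ℂ)
      * exp ((lam p.1 + conj (lam p.2)) * s) = a) (s : ℝ) :
    ∑ j, ∑ i, normSq ((q j i).eval (s : ℂ)) = a := by
  have hfiber := sum_fiber_eq_of_forall_sum_eval_mul_exp_eq_const _ _ _ hsq (2 * ((0 : ℝ) : ℂ))
  rw [sum_normSqCoeff_fiber_eq hlam fun j k _ => ⟨hre j, hre k⟩] at hfiber
  simp only [hre, filter_true, ofReal_zero, mul_zero, if_true] at hfiber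
  have hs := congrArg (fun P => P.eval (s : ℂ)) hfiber
  simp only [eval_finsetSum, normSqCoeff_diag_eval, eval_C, ← ofReal_sum] at hs
  exact_mod_cast hs

end NormSq

theorem stmt10_general (d K : ℕ)
    (γ : ℝ → EuclideanSpace ℝ (Fin d))
    (lam : Fin K → ℂ) (hlam : Function.Injective lam)
    (q : Fin K → Fin d → Polynomial ℂ)
    (hq : ∀ j, q j ≠ 0)
    (hrep : ∀ (s : ℝ) (i : Fin d),
      (γ s i : ℂ) = ∑ j : Fin K, (q j i).eval (s : ℂ) * Complex.exp (lam j * s))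
    (c : ℝ) (hnorm : ∀ s : ℝ, ‖γ s‖ = c) :
    (∀ j, (lam j).re = 0) ∧ ∀ j i, (q j i).natDegree = 0 := by
  have hsq : ∀ s : ℝ, ∑ p : Fin K × Fin K, (normSqCoeff q p).eval (s : ℂ)
      * exp ((lam p.1 + conj (lam p.2)) * s) = ((c ^ 2 : ℝ) : ℂ) := fun s => by
    rw [sum_normSqCoeff_eval_mul_exp lam q (hrep s), ← hnorm s, EuclideanSpace.real_norm_sq_eq]
    push_cast
    simp only [conj_ofReal, sq]
  have hre := re_eq_zero hlam hq hsq
  refine ⟨hre, fun j i => natDegree_eq_zero_of_norm_eval_ofReal_le (B := |c|) fun s => ?_⟩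
  have hle : normSq ((q j i).eval (s : ℂ)) ≤ c ^ 2 := by
    rw [← sum_sum_normSq_eval_eq hlam hre hsq s]
    exact (single_le_sum (f := fun i => normSq ((q j i).eval (s : ℂ)))
      (fun _ _ => normSq_nonneg _) (mem_univ i)).trans
      (single_le_sum (f := fun j => ∑ i, normSq ((q j i).eval (s : ℂ)))
        (fun _ _ => sum_nonneg fun _ _ => normSq_nonneg _) (mem_univ j))
  rw [normSq_eq_norm_sq] at hle
  simpa only [abs_norm] using sq_le_sq.mp hle

/-- If a curve `γ : ℝ → ℝ^d` of constant norm has an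
exponential-polynomial representation `γ(s) = Σ_j q_j(s) e^{λ_j s}` with
distinct `λ_j ∈ ℂ` and nonzero `ℂ^d`-valued polynomials `q_j`, then every
`λ_j` is purely imaginary and every `q_j` is constant. -/
theorem stmt10 (d K : ℕ) (hK : 1 ≤ K)
    (γ : ℝ → EuclideanSpace ℝ (Fin d))
    (lam : Fin K → ℂ) (hlam : Function.Injective lam)
    (q : Fin K → Fin d → Polynomial ℂ)
    (hq : ∀ j, q j ≠ 0)
    (hrep : ∀ (s : ℝ) (i : Fin d),
      (γ s i : ℂ) = ∑ j : Fin K, (q j i).eval (s : ℂ) * Complex.exp (lam j * s))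
    (c : ℝ) (hnorm : ∀ s : ℝ, ‖γ s‖ = c) :
    (∀ j, (lam j).re = 0) ∧ ∀ j i, (q j i).natDegree = 0 :=
  stmt10_general d K γ lam hlam q hq hrep c hnorm
end

section
/- The curve γ(s) = (ζ_1 e^{iα_1 s}, …, ζ_n e^{iα_n s}) in ℂ^n (with all ζ_j ≠ 0, all α_j ≠ 0) fails to be injective if and only if every α_j is a rational multiple of α_1. -/
/-!
Two points `γ s = γ u` coincide exactly when `s - u` is a common period of all the
coordinates `e^{iα_j s}`, i.e. when every `α_j (s - u)` lies in `2πℤ`. Dividing two such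
relations shows that every `α_j / α_1` is rational; conversely, if `α_j = q_j α_1`, then
`t = 2πN / α_1` with `N` a common denominator of the `q_j` is a nonzero common period.
-/

open Complex Real

noncomputable def torusCurve {ι : Type*} (ζ : ι → ℂ) (α : ι → ℝ) (s : ℝ) : ι → ℂ :=
  fun j => ζ j * exp (I * (α j * s))

theorem torusCurve_eq_torusCurve_iff {ι : Type*} {ζ : ι → ℂ} (hζ : ∀ j, ζ j ≠ 0) (α : ι → ℝ)
    (s u : ℝ) :
    torusCurve ζ α s = torusCurve ζ α u ↔ ∀ j, ∃ k : ℤ, α j * (s - u) = k * (2 * π) := by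
  simp only [funext_iff, torusCurve, mul_right_inj' (hζ _), exp_eq_exp_iff_exists_int]
  refine forall_congr' fun j => exists_congr fun k => ?_
  rw [← sub_eq_iff_eq_add',
    show I * (α j * s) - I * (α j * u) = ((α j * (s - u) : ℝ) : ℂ) * I by push_cast; ring,
    show (k : ℂ) * (2 * π * I) = ((k * (2 * π) : ℝ) : ℂ) * I by push_cast; ring,
    mul_left_inj' I_ne_zero, ofReal_inj]

theorem not_injective_torusCurve_iff {ι : Type*} {ζ : ι → ℂ} (hζ : ∀ j, ζ j ≠ 0) (α : ι → ℝ) :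
    ¬ Function.Injective (torusCurve ζ α) ↔
      ∃ t ≠ 0, ∀ j, ∃ k : ℤ, α j * t = k * (2 * π) := by
  simp only [Function.not_injective_iff, torusCurve_eq_torusCurve_iff hζ]
  constructor
  · rintro ⟨s, u, hsu, hne⟩
    exact ⟨s - u, sub_ne_zero.mpr hne, hsu⟩
  · rintro ⟨t, ht, hper⟩
    exact ⟨t, 0, by simpa using hper, ht⟩

theorem Rat.exists_pos_nat_forall_mul_eq_int {ι : Type*} [Fintype ι] (q : ι → ℚ) :
    ∃ N : ℕ, 0 < N ∧ ∀ j, ∃ k : ℤ, q j * N = k := by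
  refine ⟨∏ j, (q j).den, Finset.prod_pos fun j _ => (q j).pos, fun j => ?_⟩
  obtain ⟨c, hc⟩ := Finset.dvd_prod_of_mem (fun j => (q j).den) (Finset.mem_univ j)
  refine ⟨(q j).num * c, ?_⟩
  rw [hc]
  push_cast
  rw [← mul_assoc, Rat.mul_den_eq_num]

theorem rat_mul_of_mul_eq_int_mul {a b t c : ℝ} {m k : ℤ} (ha : a ≠ 0) (ht : t ≠ 0)
    (hat : a * t = m * c) (hbt : b * t = k * c) : b = ((k / m : ℚ) : ℝ) * a := by
  have hc : c ≠ 0 := by rintro rfl; simp_all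
  have hm : (m : ℝ) ≠ 0 := by rintro hm; simp_all
  push_cast
  field_simp
  apply mul_right_cancel₀ (mul_ne_zero ht hc)
  linear_combination (m : ℝ) * c * hbt - k * c * hat

theorem exists_common_period_iff_forall_rat_mul {ι : Type*} [Fintype ι] {α : ι → ℝ} {i₀ : ι}
    (hα : α i₀ ≠ 0) {c : ℝ} (hc : c ≠ 0) :
    (∃ t ≠ 0, ∀ j, ∃ k : ℤ, α j * t = k * c) ↔ ∀ j, ∃ q : ℚ, α j = q * α i₀ := by
  constructor
  · rintro ⟨t, ht, hper⟩ j
    obtain ⟨m, hm⟩ := hper i₀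
    obtain ⟨k, hk⟩ := hper j
    exact ⟨k / m, rat_mul_of_mul_eq_int_mul hα ht hm hk⟩
  · intro h
    choose q hq using h
    obtain ⟨N, hN, hint⟩ := Rat.exists_pos_nat_forall_mul_eq_int q
    refine ⟨N * c / α i₀, by positivity, fun j => ?_⟩
    obtain ⟨k, hk⟩ := hint j
    refine ⟨k, ?_⟩
    rw [hq j, ← Rat.cast_intCast, ← hk]
    push_cast
    field_simp

theorem stmt14_general (n : ℕ)
    (ζ : Fin (n + 1) → ℂ) (hζ : ∀ j, ζ j ≠ 0)
    (α : Fin (n + 1) → ℝ) (hα0 : ∀ j, α j ≠ 0)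
    (γ : ℝ → Fin (n + 1) → ℂ)
    (hγ : ∀ s j, γ s j = ζ j * Complex.exp (Complex.I * (α j * s))) :
    ¬ Function.Injective γ ↔ ∀ j, ∃ q : ℚ, α j = (q : ℝ) * α 0 := by
  obtain rfl : γ = torusCurve ζ α := funext fun s => funext (hγ s)
  rw [not_injective_torusCurve_iff hζ,
    exists_common_period_iff_forall_rat_mul (hα0 0) two_pi_pos.ne']

/-- The curve `γ(s) = (ζ_1 e^{iα_1 s}, …, ζ_n e^{iα_n s})` in
`ℂ^n` (all `ζ_j ≠ 0`, all `α_j` nonzero and distinct) fails to be injective if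
and only if every `α_j` is a rational multiple of `α_1`. -/
theorem stmt14 (n : ℕ)
    (ζ : Fin (n + 1) → ℂ) (hζ : ∀ j, ζ j ≠ 0)
    (α : Fin (n + 1) → ℝ) (hα0 : ∀ j, α j ≠ 0) (hα : Function.Injective α)
    (γ : ℝ → Fin (n + 1) → ℂ)
    (hγ : ∀ s j, γ s j = ζ j * Complex.exp (Complex.I * (α j * s))) :
    ¬ Function.Injective γ ↔ ∀ j, ∃ q : ℚ, α j = (q : ℝ) * α 0 :=
  stmt14_general n ζ hζ α hα0 γ hγ
end

section
/- Define γ_m : ℝ → ℝ^{m+1} by γ_m(s)_j = sqrt(C(m,j)) cos^{m−j}(s) sin^j(s). Then there exists a skew-symmetric (m+1)×(m+1) real matrix L_m, nonzero only on the super- and sub-diagonals, such that γ_m'(s) = L_m γ_m(s) for all s. Consequently ‖D^k γ_m(s)‖ is constant in s for every k ≥ 0. -/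
/-!
Differentiating `√C(m,j) cosᵐ⁻ʲ sinʲ` and using `(j+1) C(m,j+1) = (m-j) C(m,j)` gives
`γⱼ' = bⱼ γⱼ₋₁ - bⱼ₊₁ γⱼ₊₁` with `bⱼ = √(j (m+1-j))`, i.e. `γ' = L γ` for a skew-symmetric
bidiagonal `L`. A skew operator satisfies `⟪T x, x⟫ = 0`, so every solution of `γ' = T γ` has
constant norm; and `Dᵏ γ = Tᵏ γ` solves the same equation because `Tᵏ` commutes with `T`.
-/

open Finset Real
open scoped RealInnerProductSpace Matrix ENNReal

section LinearFlow

variable {𝕜 F : Type*} [NontriviallyNormedField 𝕜] [NormedAddCommGroup F] [NormedSpace 𝕜 F]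
  {T : F →L[𝕜] F} {γ : 𝕜 → F}

theorem hasDerivAt_pow_apply (hγ : ∀ t, HasDerivAt γ (T (γ t)) t) (k : ℕ) (t : 𝕜) :
    HasDerivAt (fun t => (T ^ k) (γ t)) (T ((T ^ k) (γ t))) t := by
  have hcomm : (T ^ k) (T (γ t)) = T ((T ^ k) (γ t)) := by
    change ((T ^ k) * T) (γ t) = (T * T ^ k) (γ t)
    rw [← pow_succ, ← pow_succ']
  exact hcomm ▸ (T ^ k).hasFDerivAt.comp_hasDerivAt t (hγ t)

theorem iteratedDeriv_eq_pow_apply (hγ : ∀ t, HasDerivAt γ (T (γ t)) t) (k : ℕ) :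
    iteratedDeriv k γ = fun t => (T ^ k) (γ t) := by
  induction k with
  | zero => simp
  | succ k ih =>
    ext1 t
    rw [iteratedDeriv_succ, ih, (hasDerivAt_pow_apply hγ k t).deriv, pow_succ']
    rfl

end LinearFlow

section SkewFlow

variable {E : Type*} [NormedAddCommGroup E] [InnerProductSpace ℝ E] {T : E →L[ℝ] E} {γ : ℝ → E}

theorem norm_eq_of_hasDerivAt_skew (hT : ∀ x, ⟪T x, x⟫ = 0)
    (hγ : ∀ t, HasDerivAt γ (T (γ t)) t) (s t : ℝ) : ‖γ s‖ = ‖γ t‖ := by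
  have hsq : ∀ t, HasDerivAt (‖γ ·‖ ^ 2) 0 t := fun t => by
    have h := (hγ t).norm_sq
    rwa [real_inner_comm, hT, mul_zero] at h
  have := is_const_of_deriv_eq_zero (fun t => (hsq t).differentiableAt) (fun t => (hsq t).deriv) s t
  exact (pow_left_inj₀ (norm_nonneg _) (norm_nonneg _) two_ne_zero).1 this

theorem norm_iteratedDeriv_eq_of_hasDerivAt_skew (hT : ∀ x, ⟪T x, x⟫ = 0)
    (hγ : ∀ t, HasDerivAt γ (T (γ t)) t) (k : ℕ) (s t : ℝ) :
    ‖iteratedDeriv k γ s‖ = ‖iteratedDeriv k γ t‖ := by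
  rw [iteratedDeriv_eq_pow_apply hγ]
  exact norm_eq_of_hasDerivAt_skew hT (hasDerivAt_pow_apply hγ k) s t

end SkewFlow

theorem Matrix.inner_toEuclideanLin_self_eq_zero {n : Type*} [Fintype n] [DecidableEq n]
    {A : Matrix n n ℝ} (hA : Aᵀ = -A) (x : EuclideanSpace ℝ n) :
    ⟪A.toEuclideanLin x, x⟫ = 0 := by
  have h := A.toEuclideanLin.adjoint_inner_right x x
  rw [← Matrix.toEuclideanLin_conjTranspose_eq_adjoint, Matrix.conjTranspose_eq_transpose_of_trivial,
    hA, map_neg, LinearMap.neg_apply, inner_neg_right, real_inner_comm] at h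
  linarith

theorem hasDerivAt_piLp_of_forall {𝕜 ι : Type*} [NontriviallyNormedField 𝕜] [Fintype ι]
    {p : ℝ≥0∞} [Fact (1 ≤ p)] {E : ι → Type*} [∀ i, NormedAddCommGroup (E i)]
    [∀ i, NormedSpace 𝕜 (E i)] {γ : 𝕜 → PiLp p E} {v : PiLp p E} {t : 𝕜}
    (h : ∀ i, HasDerivAt (fun s => γ s i) (v i) t) : HasDerivAt γ v t := by
  have hcomp := (PiLp.hasFDerivAt_toLp p (fun i => γ t i)).comp_hasDerivAt t (hasDerivAt_pi.2 h)
  exact hcomp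

noncomputable def homCurveCoord (m j : ℕ) (t : ℝ) : ℝ :=
  √(m.choose j) * cos t ^ (m - j) * sin t ^ j

/-- The `sl₂` ladder coefficient `√(j (m+1-j))`; it vanishes at `j = 0` and `j = m + 1`, which
removes the boundary terms of the bidiagonal sums. -/
noncomputable def ladderCoeff (m j : ℕ) : ℝ := √((j * (m + 1 - j) : ℕ) : ℝ)

noncomputable def ladderEntry (m i k : ℕ) : ℝ :=
  if k = i + 1 then -ladderCoeff m k else if k + 1 = i then ladderCoeff m i else 0

theorem Real.sqrt_mul_sqrt_of_mul_eq {a b c d : ℝ} (ha : 0 ≤ a) (hb : 0 ≤ b)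
    (h : a * c = b ^ 2 * d) : √a * √c = b * √d := by
  rw [← Real.sqrt_mul ha, h, Real.sqrt_mul (by positivity), Real.sqrt_sq hb]

theorem ladderCoeff_zero (m : ℕ) : ladderCoeff m 0 = 0 := by simp [ladderCoeff]

theorem ladderCoeff_succ_self (m : ℕ) : ladderCoeff m (m + 1) = 0 := by simp [ladderCoeff]

theorem ladderCoeff_succ_mul_sqrt_choose_succ (m j : ℕ) :
    ladderCoeff m (j + 1) * √(m.choose (j + 1)) = (m - j : ℕ) * √(m.choose j) := by
  refine Real.sqrt_mul_sqrt_of_mul_eq (by positivity) (by positivity) ?_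
  rw [Nat.add_sub_add_right]
  have hnat : (j + 1) * (m - j) * m.choose (j + 1) = (m - j) ^ 2 * m.choose j := by
    rw [mul_comm (j + 1), mul_assoc, mul_comm (j + 1), Nat.choose_succ_right_eq]
    ring
  exact_mod_cast hnat

theorem ladderCoeff_succ_mul_sqrt_choose (m j : ℕ) :
    ladderCoeff m (j + 1) * √(m.choose j) = (j + 1 : ℕ) * √(m.choose (j + 1)) := by
  refine Real.sqrt_mul_sqrt_of_mul_eq (by positivity) (by positivity) ?_
  rw [Nat.add_sub_add_right]
  have hnat : (j + 1) * (m - j) * m.choose j = (j + 1) ^ 2 * m.choose (j + 1) := by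
    rw [mul_assoc, mul_comm (m - j), ← Nat.choose_succ_right_eq]
    ring
  exact_mod_cast hnat

theorem hasDerivAt_homCurveCoord {m j : ℕ} (hj : j ≤ m) (t : ℝ) :
    HasDerivAt (homCurveCoord m j)
      (ladderCoeff m j * homCurveCoord m (j - 1) t
        - ladderCoeff m (j + 1) * homCurveCoord m (j + 1) t) t := by
  have h := (((hasDerivAt_cos t).pow (m - j)).mul ((hasDerivAt_sin t).pow j)).const_mul
    √(m.choose j)
  have lower : ladderCoeff m j * homCurveCoord m (j - 1) t
      = √(m.choose j) * (cos t ^ (m - j) * (j * sin t ^ (j - 1) * cos t)) := by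
    rcases j with _ | j
    · simp [ladderCoeff_zero]
    · have hexp : m - j = m - (j + 1) + 1 := by omega
      simp only [homCurveCoord, Nat.add_sub_cancel, hexp, pow_succ]
      linear_combination (cos t ^ (m - (j + 1)) * cos t * sin t ^ j)
        * ladderCoeff_succ_mul_sqrt_choose m j
  have raise : ladderCoeff m (j + 1) * homCurveCoord m (j + 1) t
      = √(m.choose j) * ((m - j : ℕ) * cos t ^ (m - j - 1) * sin t * sin t ^ j) := by
    simp only [homCurveCoord, Nat.sub_sub, pow_succ]
    linear_combination (cos t ^ (m - (j + 1)) * sin t ^ j * sin t)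
      * ladderCoeff_succ_mul_sqrt_choose_succ m j
  have hfun : homCurveCoord m j = fun s => √(m.choose j) * (cos ^ (m - j) * sin ^ j) s := by
    ext s; simp only [homCurveCoord, Pi.mul_apply, Pi.pow_apply, mul_assoc]
  rw [hfun, lower, raise]
  refine h.congr_deriv ?_
  simp only [Pi.pow_apply]
  ring

theorem sum_range_ladderEntry_mul {m j : ℕ} (hj : j ≤ m) (v : ℕ → ℝ) :
    ∑ k ∈ range (m + 1), ladderEntry m j k * v k
      = ladderCoeff m j * v (j - 1) - ladderCoeff m (j + 1) * v (j + 1) := by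
  have hsplit : ∀ k, ladderEntry m j k * v k = (if k + 1 = j then ladderCoeff m j * v k else 0)
      - (if k = j + 1 then ladderCoeff m k * v k else 0) := by
    intro k
    unfold ladderEntry
    split_ifs <;> first | omega | ring
  have hraise : (∑ k ∈ range (m + 1), if k = j + 1 then ladderCoeff m k * v k else 0)
      = ladderCoeff m (j + 1) * v (j + 1) := by
    rw [sum_ite_eq']
    split_ifs with h
    · rfl
    · rw [mem_range] at h
      rw [show j = m by omega, ladderCoeff_succ_self, zero_mul]
  have hlower : (∑ k ∈ range (m + 1), if k + 1 = j then ladderCoeff m j * v k else 0)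
      = ladderCoeff m j * v (j - 1) := by
    rcases j with _ | j
    · simp [ladderCoeff_zero]
    · simp only [Nat.add_right_cancel_iff, sum_ite_eq', mem_range, Nat.add_sub_cancel]
      exact if_pos (by omega)
  rw [sum_congr rfl fun k _ => hsplit k, sum_sub_distrib, hraise, hlower]

noncomputable def ladderMatrix (m : ℕ) : Matrix (Fin (m + 1)) (Fin (m + 1)) ℝ :=
  Matrix.of fun i k => ladderEntry m i k

theorem ladderMatrix_transpose (m : ℕ) : (ladderMatrix m).transpose = -ladderMatrix m := by
  ext i k
  simp only [ladderMatrix, Matrix.transpose_apply, Matrix.neg_apply, Matrix.of_apply, ladderEntry]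
  split_ifs <;> first | omega | ring

theorem ladderMatrix_apply_eq_zero {m : ℕ} {i k : Fin (m + 1)} (h₁ : (i : ℕ) + 1 ≠ k)
    (h₂ : (k : ℕ) + 1 ≠ i) : ladderMatrix m i k = 0 := by
  simp only [ladderMatrix, Matrix.of_apply, ladderEntry]
  rw [if_neg (Ne.symm h₁), if_neg h₂]

noncomputable def homCurve (m : ℕ) (t : ℝ) : EuclideanSpace ℝ (Fin (m + 1)) :=
  WithLp.toLp 2 fun j => homCurveCoord m j t

theorem hasDerivAt_homCurve (m : ℕ) (t : ℝ) :
    HasDerivAt (homCurve m) ((ladderMatrix m).toEuclideanLin (homCurve m t)) t := by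
  refine hasDerivAt_piLp_of_forall fun i => ?_
  have hi : (i : ℕ) ≤ m := Nat.lt_succ_iff.1 i.isLt
  refine (hasDerivAt_homCurveCoord hi t).congr_deriv ?_
  change _ = ∑ k : Fin (m + 1), ladderEntry m i k * homCurveCoord m k t
  rw [Fin.sum_univ_eq_sum_range (fun k => ladderEntry m i k * homCurveCoord m k t),
    sum_range_ladderEntry_mul hi]

/-- The homogeneous curve
`γ_m(s)_j = √(C(m,j)) cosᵐ⁻ʲ(s) sinʲ(s)` satisfies `γ_m' = L_m γ_m` for a
skew-symmetric bidiagonal matrix `L_m` (nonzero entries only on the super- and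
sub-diagonals); consequently all derivatives of `γ_m` have constant norm. -/
theorem stmt16 (m : ℕ)
    (γ : ℝ → EuclideanSpace ℝ (Fin (m + 1)))
    (hγ : ∀ (s : ℝ) (j : Fin (m + 1)),
      γ s j = Real.sqrt (m.choose j) * Real.cos s ^ (m - (j : ℕ)) * Real.sin s ^ (j : ℕ)) :
    (∃ L : Matrix (Fin (m + 1)) (Fin (m + 1)) ℝ,
      L.transpose = -L ∧
      (∀ i j : Fin (m + 1), (i : ℕ) + 1 ≠ (j : ℕ) → (j : ℕ) + 1 ≠ (i : ℕ) → L i j = 0) ∧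
      ∀ s : ℝ, deriv γ s = Matrix.toEuclideanLin L (γ s)) ∧
    ∀ k : ℕ, ∃ c : ℝ, ∀ s : ℝ, ‖iteratedDeriv k γ s‖ = c := by
  obtain rfl : γ = homCurve m := funext fun s => PiLp.ext (hγ s)
  set T := LinearMap.toContinuousLinearMap (ladderMatrix m).toEuclideanLin
  have hflow : ∀ t, HasDerivAt (homCurve m) (T (homCurve m t)) t := hasDerivAt_homCurve m
  have hskew : ∀ x, ⟪T x, x⟫ = 0 :=
    Matrix.inner_toEuclideanLin_self_eq_zero (ladderMatrix_transpose m)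
  refine ⟨⟨ladderMatrix m, ladderMatrix_transpose m, fun _ _ => ladderMatrix_apply_eq_zero,
    fun s => (hasDerivAt_homCurve m s).deriv⟩,
    fun k => ⟨_, fun s => norm_iteratedDeriv_eq_of_hasDerivAt_skew hskew hflow k s 0⟩⟩
end

section
/- Let L_m be the (m+1)×(m+1) skew-symmetric matrix satisfying γ_m' = L_m γ_m for γ_m(s)_j = sqrt(C(m,j)) cos^{m−j}(s) sin^j(s). Then the eigenvalues of L_m are {±(m−2j)i : 0 ≤ j ≤ ⌊m/2⌋}; i.e., for m = 2k they are 0, ±2i, ±4i, …, ±2ki, and for m = 2k+1 they are ±i, ±3i, …, ±(2k+1)i, all distinct. -/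
/-!
For a row vector `w`, the function `s ↦ w ⬝ γ_m(s)` has derivative `(w L) ⬝ γ_m(s)`, and the
coordinates of `γ_m` are linearly independent functions (at `s = arctan x` they are `cos^m s`
times the monomials `x^k`). Hence `w ⬝ γ_m(s) = e^{μ s}` forces `w L = μ w`, so `μ` is an
eigenvalue of `L`. Since `e^{i(m-2j)s} = (cos s + i sin s)^{m-j} (cos s - i sin s)^j` is a
homogeneous polynomial of degree `m` in `cos s, sin s`, every `(m - 2j) i` with `0 ≤ j ≤ m`
arises this way, and these `m + 1` distinct numbers exhaust the roots of the characteristic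
polynomial.
-/

open Finset

namespace Polynomial

variable {R : Type*} [CommSemiring R]

lemma homogenize_pow {p : R[X]} {n : ℕ} (hp : p.natDegree ≤ n) (k : ℕ) :
    homogenize (p ^ k) (k * n) = homogenize p n ^ k := by
  induction k with
  | zero => simp
  | succ k ih =>
    rw [pow_succ, add_mul, one_mul, homogenize_mul _ _ (natDegree_pow_le_of_le k hp) hp, ih,
      pow_succ]

lemma eval_homogenize_eq_sum (p : R[X]) (n : ℕ) (x : Fin 2 → R) :
    MvPolynomial.eval x (p.homogenize n) =
      ∑ k ∈ range (n + 1), p.coeff k * x 0 ^ k * x 1 ^ (n - k) := by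
  rw [homogenize, map_sum, Nat.sum_antidiagonal_eq_sum_range_succ_mk]
  refine sum_congr rfl fun k _ => ?_
  simp [MvPolynomial.eval_monomial, Finsupp.prod_fintype, mul_assoc]

end Polynomial

open Polynomial Complex Matrix

lemma sum_coeff_mul_cos_pow_mul_sin_pow (p : ℂ[X]) (m : ℕ) (s : ℝ) :
    ∑ k : Fin (m + 1),
        p.coeff k * (Real.cos s : ℂ) ^ (m - k : ℕ) * (Real.sin s : ℂ) ^ (k : ℕ) =
      MvPolynomial.eval ![(Real.sin s : ℂ), (Real.cos s : ℂ)] (p.homogenize m) := by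
  rw [eval_homogenize_eq_sum,
    Fin.sum_univ_eq_sum_range
      (fun k => p.coeff k * (Real.cos s : ℂ) ^ (m - k) * (Real.sin s : ℂ) ^ k)]
  exact sum_congr rfl fun k _ => by simp only [cons_val_zero, cons_val_one]; ring

lemma exists_sum_cos_pow_mul_sin_pow_eq_exp {m j : ℕ} (hj : j ≤ m) :
    ∃ c : Fin (m + 1) → ℂ, ∀ s : ℝ,
      ∑ k, c k * (Real.cos s : ℂ) ^ (m - k : ℕ) * (Real.sin s : ℂ) ^ (k : ℕ) =
        exp (((m : ℂ) - 2 * j) * I * s) := by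
  have hdeg : ∀ a : ℂ, (1 + C a * X).natDegree ≤ 1 := fun a => by compute_degree
  set P : ℂ[X] := (1 + C I * X) ^ (m - j) * (1 + C (-I) * X) ^ j
  have hP : P.homogenize m =
      (.X 1 + .C I * .X 0) ^ (m - j) * (.X 1 + .C (-I) * .X 0) ^ j := by
    have hm : m = (m - j) * 1 + j * 1 := by omega
    rw [hm, homogenize_mul _ _ (natDegree_pow_le_of_le _ (hdeg _))
      (natDegree_pow_le_of_le _ (hdeg _)), homogenize_pow (hdeg _), homogenize_pow (hdeg _)]
    simp
  refine ⟨fun k => P.coeff k, fun s => ?_⟩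
  have hplus : cos s + I * sin s = exp (s * I) := by rw [exp_mul_I]; ring
  have hminus : cos s + -I * sin s = exp (-s * I) := by rw [exp_mul_I, cos_neg, sin_neg]; ring
  rw [sum_coeff_mul_cos_pow_mul_sin_pow]
  simp only [hP, map_mul, map_pow, map_add, MvPolynomial.eval_X,
    MvPolynomial.eval_C, cons_val_zero, cons_val_one, ofReal_cos, ofReal_sin]
  rw [hplus, hminus, ← exp_nat_mul, ← exp_nat_mul, ← exp_add, Nat.cast_sub hj]
  ring_nf

lemma eq_zero_of_sum_cos_pow_mul_sin_pow_eq_zero {m : ℕ} {u : Fin (m + 1) → ℂ}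
    (h : ∀ s : ℝ,
      ∑ k, u k * (Real.cos s : ℂ) ^ (m - k : ℕ) * (Real.sin s : ℂ) ^ (k : ℕ) = 0) :
    u = 0 := by
  set Q : ℂ[X] := ∑ k : Fin (m + 1), monomial k (u k)
  have hcoeff (k : Fin (m + 1)) : Q.coeff k = u k := by
    simp [Q, finsetSum_coeff, coeff_monomial, Fin.val_inj]
  have hdeg : Q.natDegree ≤ m := natDegree_sum_le_of_forall_le _ _ fun k _ =>
    (natDegree_monomial_le _).trans (Nat.lt_succ_iff.mp k.isLt)
  have hroot (x : ℝ) : Q.eval (x : ℂ) = 0 := by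
    have hcos := Real.cos_arctan_pos x
    have htan : Real.sin (Real.arctan x) / Real.cos (Real.arctan x) = x := by
      rw [← Real.tan_eq_sin_div_cos, Real.tan_arctan]
    have hsum := h (Real.arctan x)
    simp only [← hcoeff] at hsum
    rw [sum_coeff_mul_cos_pow_mul_sin_pow,
      eval_homogenize hdeg _ (ofReal_ne_zero.mpr hcos.ne')] at hsum
    simp only [cons_val_zero, cons_val_one, ← ofReal_div, htan] at hsum
    exact (mul_eq_zero.mp hsum).resolve_right (pow_ne_zero _ (ofReal_ne_zero.mpr hcos.ne'))
  have hQ : Q = 0 := eq_zero_of_infinite_isRoot Q <|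
    (Set.infinite_range_of_injective ofReal_injective).mono
      (by rintro _ ⟨x, rfl⟩; exact hroot x)
  ext k
  rw [← hcoeff, hQ, coeff_zero, Pi.zero_apply]

lemma Matrix.isRoot_charpoly_of_dotProduct_eq_cexp {n : Type*} [Fintype n] [DecidableEq n]
    {A : Matrix n n ℂ} {G : ℝ → n → ℂ} (hG : ∀ s, HasDerivAt G (A *ᵥ G s) s)
    (hindep : ∀ u : n → ℂ, (∀ s, u ⬝ᵥ G s = 0) → u = 0) {w : n → ℂ} {μ : ℂ}
    (hw : ∀ s : ℝ, w ⬝ᵥ G s = exp (μ * s)) :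
    A.charpoly.IsRoot μ := by
  have hderiv (s : ℝ) : HasDerivAt (fun s => w ⬝ᵥ G s) ((w ᵥ* A) ⬝ᵥ G s) s := by
    rw [← dotProduct_mulVec]
    exact HasDerivAt.fun_sum fun i _ => (hasDerivAt_pi.1 (hG s) i).const_mul (w i)
  have hexp (s : ℝ) : HasDerivAt (fun s : ℝ => exp (μ * s)) (μ * exp (μ * s)) s := by
    simpa [mul_comm] using ((hasDerivAt_id (s : ℂ)).const_mul μ).cexp.comp_ofReal
  have heig : w ᵥ* A = μ • w := sub_eq_zero.mp <| hindep _ fun s => by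
    rw [sub_dotProduct, smul_dotProduct, (hderiv s).unique (funext hw ▸ hexp s), hw, smul_eq_mul,
      sub_self]
  have hw0 : w ≠ 0 := fun h => by simpa [h] using hw 0
  rw [Polynomial.IsRoot, eval_charpoly, ← exists_vecMul_eq_zero_iff]
  refine ⟨w, hw0, ?_⟩
  rw [vecMul_sub, heig, sub_eq_zero]
  ext i
  simp [scalar_apply, vecMul_diagonal, mul_comm]

lemma hasDerivAt_ofReal_of_deriv_eq_toEuclideanLin {n : Type*} [Fintype n] [DecidableEq n]
    {γ : ℝ → EuclideanSpace ℝ n} {L : Matrix n n ℝ} (hγ : Differentiable ℝ γ)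
    (hode : ∀ s, deriv γ s = L.toEuclideanLin (γ s)) (s : ℝ) :
    HasDerivAt (fun s k => (γ s k : ℂ)) (L.map ofReal *ᵥ fun k => (γ s k : ℂ)) s := by
  refine hasDerivAt_pi.2 fun k => ?_
  have h := (EuclideanSpace.proj k).hasFDerivAt.comp_hasDerivAt s (hode s ▸ (hγ s).hasDerivAt)
  refine h.ofReal_comp.congr_deriv ?_
  exact RingHom.map_mulVec ofRealHom L (γ s).ofLp k

/-- The curve `γ_m` of the statement, with complex coordinates. -/
noncomputable def binomialCurve (m : ℕ) (s : ℝ) : Fin (m + 1) → ℂ := fun k =>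
  ((Real.sqrt (m.choose k) * Real.cos s ^ (m - k : ℕ) * Real.sin s ^ (k : ℕ) : ℝ) : ℂ)

lemma sqrt_choose_ne_zero {m : ℕ} (k : Fin (m + 1)) : (Real.sqrt (m.choose k) : ℂ) ≠ 0 :=
  ofReal_ne_zero.mpr (Real.sqrt_ne_zero'.mpr (by exact_mod_cast Nat.choose_pos k.is_le))

lemma dotProduct_binomialCurve {m : ℕ} (u : Fin (m + 1) → ℂ) (s : ℝ) :
    u ⬝ᵥ binomialCurve m s = ∑ k, u k * Real.sqrt (m.choose k) *
      (Real.cos s : ℂ) ^ (m - k : ℕ) * (Real.sin s : ℂ) ^ (k : ℕ) := by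
  simp only [dotProduct, binomialCurve]
  push_cast
  exact Finset.sum_congr rfl fun k _ => by ring

lemma eq_zero_of_forall_dotProduct_binomialCurve_eq_zero {m : ℕ} {u : Fin (m + 1) → ℂ}
    (h : ∀ s, u ⬝ᵥ binomialCurve m s = 0) : u = 0 := by
  have hscaled := eq_zero_of_sum_cos_pow_mul_sin_pow_eq_zero fun s =>
    (dotProduct_binomialCurve u s).symm.trans (h s)
  funext k
  exact (mul_eq_zero.mp (congrFun hscaled k)).resolve_right (sqrt_choose_ne_zero k)

lemma exists_dotProduct_binomialCurve_eq_cexp {m j : ℕ} (hj : j ≤ m) :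
    ∃ w : Fin (m + 1) → ℂ, ∀ s : ℝ,
      w ⬝ᵥ binomialCurve m s = exp (((m : ℂ) - 2 * j) * I * s) := by
  obtain ⟨c, hc⟩ := exists_sum_cos_pow_mul_sin_pow_eq_exp hj
  refine ⟨fun k => c k / Real.sqrt (m.choose k), fun s => ?_⟩
  rw [dotProduct_binomialCurve, ← hc]
  refine Finset.sum_congr rfl fun k _ => ?_
  rw [div_mul_cancel₀ _ (sqrt_choose_ne_zero k)]

theorem stmt17_general (m : ℕ)
    (γ : ℝ → EuclideanSpace ℝ (Fin (m + 1)))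
    (hγ : ∀ (s : ℝ) (j : Fin (m + 1)),
      γ s j = Real.sqrt (m.choose j) * Real.cos s ^ (m - (j : ℕ)) * Real.sin s ^ (j : ℕ))
    (L : Matrix (Fin (m + 1)) (Fin (m + 1)) ℝ)
    (hode : ∀ s : ℝ, deriv γ s = Matrix.toEuclideanLin L (γ s)) :
    (L.map (Complex.ofReal)).charpoly.roots =
      (Multiset.range (m + 1)).map (fun j => ((m : ℂ) - 2 * (j : ℂ)) * Complex.I) := by
  have hdiff : Differentiable ℝ γ := (differentiable_piLp 2).2 fun j => by
    simp only [hγ]; fun_prop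
  have hcurve : (fun s k => (γ s k : ℂ)) = binomialCurve m := by
    funext s k; simp [binomialCurve, hγ]
  have hG : ∀ s, HasDerivAt (binomialCurve m) (L.map ofReal *ᵥ binomialCurve m s) s := by
    rw [← hcurve]
    exact hasDerivAt_ofReal_of_deriv_eq_toEuclideanLin hdiff hode
  have hroot (j : ℕ) (hj : j ≤ m) :
      (L.map ofReal).charpoly.IsRoot (((m : ℂ) - 2 * j) * I) := by
    obtain ⟨w, hw⟩ := exists_dotProduct_binomialCurve_eq_cexp hj
    exact isRoot_charpoly_of_dotProduct_eq_cexp hG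
      (fun _ => eq_zero_of_forall_dotProduct_binomialCurve_eq_zero) hw
  have hinj : Function.Injective fun j : ℕ => ((m : ℂ) - 2 * j) * I := fun a b hab => by
    have := mul_right_cancel₀ I_ne_zero hab
    exact_mod_cast (by linear_combination (-1 / 2 : ℂ) * this : (a : ℂ) = b)
  have hroots := roots_eq_of_natDegree_le_card_of_ne_zero
    (S := (range (m + 1)).map ⟨_, hinj⟩) (by simpa [Nat.lt_succ_iff] using hroot) (by simp)
    (charpoly_monic _).ne_zero
  simpa using hroots

/-- If `L` is a skew-symmetric matrix with `γ_m' = L γ_m`, where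
`γ_m(s)_j = √(C(m,j)) cosᵐ⁻ʲ(s) sinʲ(s)`, then the eigenvalues of `L`
(i.e., the roots of the characteristic polynomial of its complexification,
with multiplicity) are exactly `(m − 2j)i` for `0 ≤ j ≤ m`, i.e.
`0, ±2i, …, ±2ki` when `m = 2k` and `±i, ±3i, …, ±(2k+1)i` when `m = 2k+1`,
each occurring once (so all eigenvalues are distinct). -/
theorem stmt17 (m : ℕ)
    (γ : ℝ → EuclideanSpace ℝ (Fin (m + 1)))
    (hγ : ∀ (s : ℝ) (j : Fin (m + 1)),
      γ s j = Real.sqrt (m.choose j) * Real.cos s ^ (m - (j : ℕ)) * Real.sin s ^ (j : ℕ))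
    (L : Matrix (Fin (m + 1)) (Fin (m + 1)) ℝ)
    (hskew : L.transpose = -L)
    (hode : ∀ s : ℝ, deriv γ s = Matrix.toEuclideanLin L (γ s)) :
    (L.map (Complex.ofReal)).charpoly.roots =
      (Multiset.range (m + 1)).map (fun j => ((m : ℂ) - 2 * (j : ℂ)) * Complex.I) :=
  stmt17_general m γ hγ L hode
end
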